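/- (Two quadratic constraints) Let q₁, q₂ : ℝⁿ → ℝ be nonconvex quadratics qᵢ(x) = xᵀAᵢx + 2bᵢᵀx + cᵢ. Assume primal strict feasibility (∃ x̂ with q₁(x̂) < 0 and q₂(x̂) < 0) and dual strict feasibility (∃ γ̂ ∈ ℝ²₊ with γ̂₁A₁ + γ̂₂A₂ ≻ 0). Let γ⁽¹⁾, γ⁽²⁾ ∈ ℝ²₊ be generators of the two-dimensional cone Γ₁ = {γ ∈ ℝ²₊ : γ₁A₁+γ₂A₂ ⪰ 0} (so Γ₁ = cone{γ⁽¹⁾,γ⁽²⁾}). Then conv(Ŝ) = Ŝ_SDP if and only if for each i ∈ {1,2}, the set ker(A[γ⁽ⁱ⁾]) ∩ (b[γ⁽ⁱ⁾])^⊥ contains a nonzero vector, where A[γ] := γ₁A₁+γ₂A₂ and b[γ] := γ₁b₁+γ₂b₂. -/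

import Mathlib

noncomputable section
open Matrix Set

/-- `A[γ] = γ₁ A₁ + γ₂ A₂` for `γ ∈ ℝ²`. -/
def Amix2 {n : ℕ} (A1 A2 : Matrix (Fin n) (Fin n) ℝ) (g : Fin 2 → ℝ) :
    Matrix (Fin n) (Fin n) ℝ :=
  g 0 • A1 + g 1 • A2

/-- `b[γ] = γ₁ b₁ + γ₂ b₂` for `γ ∈ ℝ²`. -/
def bmix2 {n : ℕ} (b1 b2 : Fin n → ℝ) (g : Fin 2 → ℝ) : Fin n → ℝ :=
  g 0 • b1 + g 1 • b2

/-- The quadratic function `x ↦ xᵀ M x + 2 bᵀ x + c`. -/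
def quadF {n : ℕ} (M : Matrix (Fin n) (Fin n) ℝ) (b : Fin n → ℝ) (c : ℝ)
    (x : Fin n → ℝ) : ℝ :=
  x ⬝ᵥ M.mulVec x + 2 * (b ⬝ᵥ x) + c

/-- `Γ₁ = {γ ∈ ℝ²₊ : γ₁A₁ + γ₂A₂ ⪰ 0}` (with objective `q₀ = 0`). -/
def Gamma1' {n : ℕ} (A1 A2 : Matrix (Fin n) (Fin n) ℝ) : Set (Fin 2 → ℝ) :=
  {g | (∀ i, 0 ≤ g i) ∧ (Amix2 A1 A2 g).PosSemidef}

/-- `Ŝ = {x : q₁(x) ≤ 0, q₂(x) ≤ 0}`. -/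
def Shat {n : ℕ} (A1 A2 : Matrix (Fin n) (Fin n) ℝ) (b1 b2 : Fin n → ℝ)
    (c1 c2 : ℝ) : Set (Fin n → ℝ) :=
  {x | quadF A1 b1 c1 x ≤ 0 ∧ quadF A2 b2 c2 x ≤ 0}

/-- `Ŝ_SDP = {x : ∃ X ⪰ xxᵀ, ⟨Aᵢ,X⟩ + 2bᵢᵀx + cᵢ ≤ 0, i = 1,2}`. -/
def ShatSDP {n : ℕ} (A1 A2 : Matrix (Fin n) (Fin n) ℝ) (b1 b2 : Fin n → ℝ)
    (c1 c2 : ℝ) : Set (Fin n → ℝ) :=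
  {x | ∃ X : Matrix (Fin n) (Fin n) ℝ, (X - vecMulVec x x).PosSemidef ∧
    (A1 * X).trace + 2 * (b1 ⬝ᵥ x) + c1 ≤ 0 ∧
    (A2 * X).trace + 2 * (b2 ⬝ᵥ x) + c2 ≤ 0}

/-!
Since `A₁, A₂` are nonconvex and some `A[γ]` is positive definite, the generators `γ⁽¹⁾, γ⁽²⁾`
are linearly independent with positive entries, each `A[γ⁽ⁱ⁾]` is singular positive semidefinite,
and a kernel vector of one generator has a positive `A`-form for the other. Hence `Ŝ_SDP` is
exactly the set where both aggregated quadratics `pᵢ = γ⁽ⁱ⁾₁ q₁ + γ⁽ⁱ⁾₂ q₂` are nonpositive: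
such an `x` lifts to `X = xxᵀ + s₁ y₁y₁ᵀ + s₂ y₂y₂ᵀ`.

If `z ≠ 0` lies in `ker A[γ⁽ⁱ⁾] ∩ b[γ⁽ⁱ⁾]^⊥`, then `pᵢ` is constant along `x + t z` while one of
`q₁, q₂` is strictly concave along it; so a point of `Ŝ_SDP` violating that `qⱼ` lies on a chord
joining two points of `Ŝ`. If instead that intersection is trivial, the convex function `pᵢ` has
a zero `x` with `p_other(x) < 0`, so `x ∈ Ŝ_SDP ∖ Ŝ`, and the tangent hyperplane of `pᵢ` at `x`
strictly separates `x` from `Ŝ`.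
-/

open Filter Topology

namespace Matrix

variable {ι : Type*} [Fintype ι]

theorem IsSymm.dotProduct_mulVec_comm {M : Matrix ι ι ℝ} (hM : M.IsSymm) (x y : ι → ℝ) :
    x ⬝ᵥ M *ᵥ y = y ⬝ᵥ M *ᵥ x := by
  rw [dotProduct_mulVec, ← mulVec_transpose, hM.eq, dotProduct_comm]

theorem trace_mul_vecMulVec_self (A : Matrix ι ι ℝ) (u : ι → ℝ) :
    (A * vecMulVec u u).trace = u ⬝ᵥ A *ᵥ u := by
  rw [mul_vecMulVec, trace_vecMulVec, dotProduct_comm]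

theorem PosSemidef.trace_mul_nonneg {M N : Matrix ι ι ℝ} (hM : M.PosSemidef)
    (hN : N.PosSemidef) : 0 ≤ (M * N).trace := by
  classical
  obtain ⟨D, rfl⟩ : ∃ D : Matrix ι ι ℝ, N = star D * D := by
    open scoped MatrixOrder in exact CStarAlgebra.nonneg_iff_eq_star_mul_self.mp hN.nonneg
  rw [← Matrix.mul_assoc, trace_mul_comm, ← Matrix.mul_assoc, star_eq_conjTranspose]
  exact (hM.mul_mul_conjTranspose_same D).trace_nonneg

theorem PosSemidef.dotProduct_mulVec_pos {M : Matrix ι ι ℝ} (hM : M.PosSemidef) {x : ι → ℝ}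
    (hx : M *ᵥ x ≠ 0) : 0 < x ⬝ᵥ M *ᵥ x :=
  (by simpa using hM.dotProduct_mulVec_nonneg x : 0 ≤ x ⬝ᵥ M *ᵥ x).lt_of_ne'
    fun h => hx ((hM.dotProduct_mulVec_zero_iff x).mp (by simpa using h))

theorem PosSemidef.exists_mulVec_eq_zero {M : Matrix ι ι ℝ} (hM : M.PosSemidef)
    (hM' : ¬ M.PosDef) : ∃ y : ι → ℝ, y ≠ 0 ∧ M *ᵥ y = 0 := by
  contrapose! hM'
  exact .of_dotProduct_mulVec_pos hM.1 fun x hx => by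
    simpa using hM.dotProduct_mulVec_pos (hM' x hx)

theorem PosDef.eventually_posDef_add_smul {A B : Matrix ι ι ℝ} (hA : A.PosDef)
    (hB : B.IsSymm) : ∀ᶠ ε in 𝓝 (0 : ℝ), (A + ε • B).PosDef := by
  have hcont : Continuous fun p : ℝ × (ι → ℝ) => p.2 ⬝ᵥ (A + p.1 • B) *ᵥ p.2 := by
    fun_prop
  have hsphere : ∀ᶠ ε in 𝓝 (0 : ℝ), ∀ u ∈ Metric.sphere (0 : ι → ℝ) 1,
      0 < u ⬝ᵥ (A + ε • B) *ᵥ u := by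
    refine (isCompact_sphere 0 1).eventually_forall_of_forall_eventually fun u hu => ?_
    have hu0 : u ≠ 0 := ne_zero_of_mem_unit_sphere ⟨u, hu⟩
    exact continuousAt_const.eventually_lt hcont.continuousAt
      (by simpa using hA.dotProduct_mulVec_pos hu0)
  filter_upwards [hsphere] with ε hε
  have hsymm : (ε • B).IsSymm := hB.smul ε
  refine .of_dotProduct_mulVec_pos (hA.1.add (isHermitian_iff_isSymm.mpr hsymm)) fun x hx => ?_
  have hnorm : 0 < ‖x‖ := norm_pos_iff.mpr hx
  have hu : ‖x‖⁻¹ • x ∈ Metric.sphere (0 : ι → ℝ) 1 := by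
    simp [norm_smul, hnorm.ne']
  have hinv : 0 ≤ ‖x‖⁻¹ := by positivity
  have := hε _ hu
  simp only [mulVec_smul, dotProduct_smul, smul_dotProduct, smul_eq_mul] at this
  rw [star_trivial]
  exact pos_of_mul_pos_right (pos_of_mul_pos_right this hinv) hinv

end Matrix

theorem exists_pos_root_of_neg {P β γ : ℝ} (hγ : 0 < γ) (hP : P < 0) :
    ∃ t, 0 < t ∧ P + 2 * t * β + t ^ 2 * γ = 0 := by
  have hdisc : 0 ≤ β ^ 2 - P * γ := by nlinarith [sq_nonneg β]
  set r := √(β ^ 2 - P * γ)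
  have hr : r ^ 2 = β ^ 2 - P * γ := Real.sq_sqrt hdisc
  have hrβ : β < r := by nlinarith [Real.sqrt_nonneg (β ^ 2 - P * γ), sq_nonneg (r + β)]
  refine ⟨(r - β) / γ, div_pos (by linarith) hγ, ?_⟩
  field_simp
  linear_combination hr

theorem neg_or_neg_of_orthogonal {p q r s a b a' b' : ℝ} (hp : 0 < p) (hq : 0 < q) (hr : 0 < r)
    (hs : 0 < s) (h : p * a + q * b = 0) (h' : 0 < r * a + s * b)
    (k : r * a' + s * b' = 0) (k' : 0 < p * a' + q * b') :
    (a < 0 ∨ a' < 0) ∧ (b < 0 ∨ b' < 0) := by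
  constructor <;> by_contra! hnn <;> rcases le_total (q * r) (p * s) with hd | hd
  · nlinarith [mul_nonneg hnn.1 (sub_nonneg.mpr hd)]
  · nlinarith [mul_nonneg hnn.2 (sub_nonneg.mpr hd)]
  · nlinarith [mul_nonneg hnn.2 (sub_nonneg.mpr hd)]
  · nlinarith [mul_nonneg hnn.1 (sub_nonneg.mpr hd)]

section Quadratic

variable {n : ℕ}

theorem quadF_add_smul {M : Matrix (Fin n) (Fin n) ℝ} (hM : M.IsSymm) (b : Fin n → ℝ) (c : ℝ)
    (x y : Fin n → ℝ) (t : ℝ) :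
    quadF M b c (x + t • y) =
      quadF M b c x + 2 * t * ((M *ᵥ x + b) ⬝ᵥ y) + t ^ 2 * (y ⬝ᵥ M *ᵥ y) := by
  have hxy := hM.dotProduct_mulVec_comm x y
  simp only [quadF, mulVec_add, mulVec_smul, dotProduct_add, add_dotProduct, dotProduct_smul,
    smul_dotProduct, smul_eq_mul, dotProduct_comm (M *ᵥ x) y] at hxy ⊢
  rw [hxy]
  ring

theorem quadF_add_smul_of_mulVec_eq_zero {M : Matrix (Fin n) (Fin n) ℝ} (hM : M.IsSymm)
    (b : Fin n → ℝ) (c : ℝ) (x : Fin n → ℝ) {y : Fin n → ℝ} (hy : M *ᵥ y = 0) (t : ℝ) :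
    quadF M b c (x + t • y) = quadF M b c x + 2 * t * (b ⬝ᵥ y) := by
  rw [quadF_add_smul hM, add_dotProduct, dotProduct_comm, hM.dotProduct_mulVec_comm, hy]
  simp

theorem quadF_neg (M : Matrix (Fin n) (Fin n) ℝ) (b : Fin n → ℝ) (c : ℝ) (x : Fin n → ℝ) :
    quadF (-M) (-b) (-c) x = -quadF M b c x := by
  simp only [quadF, neg_mulVec, dotProduct_neg, neg_dotProduct]
  ring

theorem exists_pos_quadF_add_smul_eq_zero {M : Matrix (Fin n) (Fin n) ℝ} (hM : M.IsSymm)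
    {b : Fin n → ℝ} {c : ℝ} {x y : Fin n → ℝ} (hx : quadF M b c x < 0)
    (hy : 0 < y ⬝ᵥ M *ᵥ y) : ∃ t : ℝ, 0 < t ∧ quadF M b c (x + t • y) = 0 := by
  simpa only [quadF_add_smul hM] using exists_pos_root_of_neg hy hx

theorem mem_convexHull_of_quadF_pos {M : Matrix (Fin n) (Fin n) ℝ} (hM : M.IsSymm)
    {b : Fin n → ℝ} {c : ℝ} {S : Set (Fin n → ℝ)} {x y : Fin n → ℝ}
    (hy : y ⬝ᵥ M *ᵥ y < 0) (hx : 0 < quadF M b c x)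
    (hS : ∀ t : ℝ, quadF M b c (x + t • y) = 0 → x + t • y ∈ S) : x ∈ convexHull ℝ S := by
  have hM' : (-M).IsSymm := hM.neg
  have hx' : quadF (-M) (-b) (-c) x < 0 := by rw [quadF_neg]; linarith
  obtain ⟨t, ht, hxt⟩ := exists_pos_quadF_add_smul_eq_zero hM' hx'
    (by simpa [neg_mulVec] using hy)
  obtain ⟨s, hs, hxs⟩ := exists_pos_quadF_add_smul_eq_zero hM' hx' (y := -y)
    (by simpa [neg_mulVec, mulVec_neg] using hy)
  rw [quadF_neg, neg_eq_zero] at hxt hxs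
  rw [smul_neg, ← neg_smul] at hxs
  have hmem := (convex_convexHull ℝ S).add_smul_sub_mem
    (subset_convexHull ℝ S (hS _ hxs)) (subset_convexHull ℝ S (hS _ hxt))
    (t := s / (s + t)) ⟨by positivity, div_le_one_of_le₀ (by linarith) (by positivity)⟩
  convert hmem using 1
  rw [add_sub_add_left_eq_sub, ← sub_smul, smul_smul, sub_neg_eq_add, add_comm t s,
    div_mul_cancel₀ _ (by positivity : s + t ≠ 0), neg_smul, neg_add_cancel_right]

theorem not_mem_convexHull_of_quadF_eq_zero {M : Matrix (Fin n) (Fin n) ℝ} (hM : M.IsSymm)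
    (hpsd : M.PosSemidef) {b : Fin n → ℝ} {c : ℝ}
    (hker : ¬ ∃ y : Fin n → ℝ, y ≠ 0 ∧ M *ᵥ y = 0 ∧ b ⬝ᵥ y = 0)
    {S : Set (Fin n → ℝ)} (hS : ∀ z ∈ S, quadF M b c z ≤ 0) {x : Fin n → ℝ}
    (hx : quadF M b c x = 0) (hxS : x ∉ S) : x ∉ convexHull ℝ S := by
  set v := M *ᵥ x + b
  suffices hsub : S ⊆ {z | v ⬝ᵥ z < v ⬝ᵥ x} from
    fun hmem => lt_irrefl (v ⬝ᵥ x) (convexHull_min hsub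
      (convex_halfSpace_lt ⟨dotProduct_add v, fun r z => dotProduct_smul r v z⟩ _) hmem)
  intro z hz
  have hform := hpsd.dotProduct_mulVec_nonneg (z - x)
  rw [star_trivial] at hform
  have hqz := hS z hz
  rw [← add_sub_cancel x z, ← one_smul ℝ (z - x), quadF_add_smul hM, hx] at hqz
  have hle : v ⬝ᵥ (z - x) ≤ 0 := by nlinarith
  refine sub_neg.mp (dotProduct_sub v z x ▸ hle.lt_of_ne fun hv => ?_)
  have hMzx : M *ᵥ (z - x) = 0 :=
    (hpsd.dotProduct_mulVec_zero_iff _).mp (by rw [star_trivial]; nlinarith)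
  refine hker ⟨z - x, sub_ne_zero.mpr fun h => hxS (h ▸ hz), hMzx, ?_⟩
  rwa [add_dotProduct, dotProduct_comm, hM.dotProduct_mulVec_comm, hMzx, dotProduct_zero,
    zero_add] at hv

end Quadratic

def cmix2 (c1 c2 : ℝ) (g : Fin 2 → ℝ) : ℝ :=
  g 0 * c1 + g 1 * c2

section Mix

variable {n : ℕ} {A1 A2 : Matrix (Fin n) (Fin n) ℝ} {b1 b2 : Fin n → ℝ} {c1 c2 : ℝ}

theorem Amix2_isSymm (hA1 : A1.IsSymm) (hA2 : A2.IsSymm) (g : Fin 2 → ℝ) :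
    (Amix2 A1 A2 g).IsSymm :=
  (hA1.smul _).add (hA2.smul _)

theorem Amix2_smul_add_smul (a b : ℝ) (u v : Fin 2 → ℝ) :
    Amix2 A1 A2 (a • u + b • v) = a • Amix2 A1 A2 u + b • Amix2 A1 A2 v := by
  simp only [Amix2, Pi.add_apply, Pi.smul_apply, smul_eq_mul, add_smul, mul_smul, smul_add]
  abel

theorem dotProduct_Amix2_mulVec (g : Fin 2 → ℝ) (x y : Fin n → ℝ) :
    x ⬝ᵥ Amix2 A1 A2 g *ᵥ y = g 0 * (x ⬝ᵥ A1 *ᵥ y) + g 1 * (x ⬝ᵥ A2 *ᵥ y) := by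
  simp only [Amix2, add_mulVec, smul_mulVec, dotProduct_add, dotProduct_smul, smul_eq_mul]

theorem quadF_mix2 (g : Fin 2 → ℝ) (x : Fin n → ℝ) :
    quadF (Amix2 A1 A2 g) (bmix2 b1 b2 g) (cmix2 c1 c2 g) x =
      g 0 * quadF A1 b1 c1 x + g 1 * quadF A2 b2 c2 x := by
  simp only [quadF, cmix2, bmix2, dotProduct_Amix2_mulVec, add_dotProduct, smul_dotProduct,
    smul_eq_mul]
  ring

theorem mix2_add_smul_of_ker (hA1 : A1.IsSymm) (hA2 : A2.IsSymm) {g : Fin 2 → ℝ}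
    {z : Fin n → ℝ} (hz : Amix2 A1 A2 g *ᵥ z = 0) (hbz : bmix2 b1 b2 g ⬝ᵥ z = 0)
    (x : Fin n → ℝ) (t : ℝ) :
    g 0 * quadF A1 b1 c1 (x + t • z) + g 1 * quadF A2 b2 c2 (x + t • z) =
      g 0 * quadF A1 b1 c1 x + g 1 * quadF A2 b2 c2 x := by
  rw [← quadF_mix2, ← quadF_mix2,
    quadF_add_smul_of_mulVec_eq_zero (Amix2_isSymm hA1 hA2 g) _ _ _ hz, hbz]
  ring

end Mix

def det2 (u v : Fin 2 → ℝ) : ℝ :=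
  u 0 * v 1 - u 1 * v 0

theorem eq_zero_of_det2_ne_zero {g g' : Fin 2 → ℝ} (hD : det2 g g' ≠ 0) {u v : ℝ}
    (h : g 0 * u + g 1 * v = 0) (h' : g' 0 * u + g' 1 * v = 0) : u = 0 ∧ v = 0 := by
  unfold det2 at hD
  constructor
  · exact (mul_eq_zero.mp (by linear_combination g' 1 * h - g 1 * h' :
      u * (g 0 * g' 1 - g 1 * g' 0) = 0)).resolve_right hD
  · exact (mul_eq_zero.mp (by linear_combination g 0 * h' - g' 0 * h :
      v * (g 0 * g' 1 - g 1 * g' 0) = 0)).resolve_right hD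

def cone2 (u v : Fin 2 → ℝ) : Set (Fin 2 → ℝ) :=
  {g | ∃ a b : ℝ, 0 ≤ a ∧ 0 ≤ b ∧ g = a • u + b • v}

section Cone

variable {u v w w' : Fin 2 → ℝ}

theorem left_mem_cone2 : u ∈ cone2 u v :=
  ⟨1, 0, zero_le_one, le_rfl, by simp⟩

theorem cone2_comm (u v : Fin 2 → ℝ) : cone2 u v = cone2 v u := by
  ext g
  exact ⟨fun ⟨a, b, ha, hb, h⟩ => ⟨b, a, hb, ha, h.trans (add_comm _ _)⟩,
    fun ⟨a, b, ha, hb, h⟩ => ⟨b, a, hb, ha, h.trans (add_comm _ _)⟩⟩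

theorem det2_comm (u v : Fin 2 → ℝ) : det2 v u = -det2 u v := by
  unfold det2; ring

theorem det2_add_smul (u h : Fin 2 → ℝ) (ε : ℝ) : det2 u (u + ε • h) = ε * det2 u h := by
  simp only [det2, Pi.add_apply, Pi.smul_apply, smul_eq_mul]; ring

theorem det2_mul_nonneg_of_mem_cone2 (hw : w ∈ cone2 u v) : 0 ≤ det2 u w * det2 u v := by
  obtain ⟨a, b, -, hb, rfl⟩ := hw
  have : det2 u (a • u + b • v) = b * det2 u v := by
    simp only [det2, Pi.add_apply, Pi.smul_apply, smul_eq_mul]; ring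
  rw [this, mul_assoc]
  exact mul_nonneg hb (mul_self_nonneg _)

theorem det2_eq_zero_of_mem_cone2 (hD : det2 u v = 0) (hw : w ∈ cone2 u v)
    (hw' : w' ∈ cone2 u v) : det2 w w' = 0 := by
  obtain ⟨a, b, -, -, rfl⟩ := hw
  obtain ⟨a', b', -, -, rfl⟩ := hw'
  unfold det2 at hD ⊢
  simp only [Pi.add_apply, Pi.smul_apply, smul_eq_mul]
  linear_combination (a * b' - a' * b) * hD

theorem ne_zero_of_det2_ne_zero (hD : det2 u v ≠ 0) : u ≠ 0 := by
  rintro rfl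
  simp [det2] at hD

end Cone

section Relaxation

variable {n : ℕ} {A1 A2 : Matrix (Fin n) (Fin n) ℝ} {b1 b2 : Fin n → ℝ} {c1 c2 : ℝ}

theorem Shat_subset_ShatSDP : Shat A1 A2 b1 b2 c1 c2 ⊆ ShatSDP A1 A2 b1 b2 c1 c2 :=
  fun x hx => ⟨vecMulVec x x, by simpa using PosSemidef.zero,
    by rw [trace_mul_vecMulVec_self]; exact hx.1,
    by rw [trace_mul_vecMulVec_self]; exact hx.2⟩

theorem convex_ShatSDP : Convex ℝ (ShatSDP A1 A2 b1 b2 c1 c2) := by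
  rintro x ⟨X, hX, hX1, hX2⟩ y ⟨Y, hY, hY1, hY2⟩ a b ha hb hab
  have hlin : ∀ (A : Matrix (Fin n) (Fin n) ℝ) (d : Fin n → ℝ) (c : ℝ),
      (A * X).trace + 2 * (d ⬝ᵥ x) + c ≤ 0 → (A * Y).trace + 2 * (d ⬝ᵥ y) + c ≤ 0 →
      (A * (a • X + b • Y)).trace + 2 * (d ⬝ᵥ (a • x + b • y)) + c ≤ 0 := by
    intro A d c hx hy
    simp only [Matrix.mul_add, Matrix.mul_smul, trace_add, trace_smul, dotProduct_add,
      dotProduct_smul, smul_eq_mul]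
    have hc : c = a * c + b * c := by rw [← add_mul, hab, one_mul]
    nlinarith [mul_nonpos_of_nonneg_of_nonpos ha hx, mul_nonpos_of_nonneg_of_nonpos hb hy]
  refine ⟨a • X + b • Y, ?_, hlin _ _ _ hX1 hY1, hlin _ _ _ hX2 hY2⟩
  have hdefect : a • X + b • Y - vecMulVec (a • x + b • y) (a • x + b • y) =
      a • (X - vecMulVec x x) + b • (Y - vecMulVec y y) +
        (a * b) • vecMulVec (x - y) (x - y) := by
    obtain rfl : b = 1 - a := by linarith
    ext i j
    simp only [Matrix.sub_apply, Matrix.add_apply, Matrix.smul_apply, vecMulVec_apply,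
      Pi.add_apply, Pi.smul_apply, Pi.sub_apply, smul_eq_mul]
    ring
  rw [hdefect]
  exact ((hX.smul ha).add (hY.smul hb)).add
    ((posSemidef_vecMulVec_self_star (x - y)).smul (mul_nonneg ha hb))

theorem convexHull_Shat_subset_ShatSDP :
    convexHull ℝ (Shat A1 A2 b1 b2 c1 c2) ⊆ ShatSDP A1 A2 b1 b2 c1 c2 :=
  convexHull_min Shat_subset_ShatSDP convex_ShatSDP

theorem mix2_nonpos_of_mem_ShatSDP {g : Fin 2 → ℝ} (hg : ∀ i, 0 ≤ g i)
    (hpsd : (Amix2 A1 A2 g).PosSemidef) {x : Fin n → ℝ}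
    (hx : x ∈ ShatSDP A1 A2 b1 b2 c1 c2) :
    g 0 * quadF A1 b1 c1 x + g 1 * quadF A2 b2 c2 x ≤ 0 := by
  obtain ⟨X, hX, hX1, hX2⟩ := hx
  have htr := hpsd.trace_mul_nonneg hX
  simp only [Amix2, Matrix.add_mul, Matrix.smul_mul, Matrix.mul_sub, trace_add, trace_smul,
    trace_sub, trace_mul_vecMulVec_self, smul_eq_mul] at htr
  simp only [quadF]
  nlinarith [mul_nonpos_of_nonneg_of_nonpos (hg 0) hX1,
    mul_nonpos_of_nonneg_of_nonpos (hg 1) hX2]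

theorem mem_ShatSDP_of_mix2_nonpos {g1 g2 : Fin 2 → ℝ} (hD : det2 g1 g2 ≠ 0)
    {y1 y2 : Fin n → ℝ} (hy1 : Amix2 A1 A2 g1 *ᵥ y1 = 0) (hy2 : Amix2 A1 A2 g2 *ᵥ y2 = 0)
    (hy12 : 0 < y1 ⬝ᵥ Amix2 A1 A2 g2 *ᵥ y1) (hy21 : 0 < y2 ⬝ᵥ Amix2 A1 A2 g1 *ᵥ y2)
    {x : Fin n → ℝ} (hx1 : g1 0 * quadF A1 b1 c1 x + g1 1 * quadF A2 b2 c2 x ≤ 0)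
    (hx2 : g2 0 * quadF A1 b1 c1 x + g2 1 * quadF A2 b2 c2 x ≤ 0) :
    x ∈ ShatSDP A1 A2 b1 b2 c1 c2 := by
  -- lift `x` to `xxᵀ + s₁ y₁y₁ᵀ + s₂ y₂y₂ᵀ`, with `sᵢ ≥ 0` making both constraints tight
  obtain ⟨s1, hs1, hs1'⟩ : ∃ s : ℝ, 0 ≤ s ∧ s * (y1 ⬝ᵥ Amix2 A1 A2 g2 *ᵥ y1) =
      -(g2 0 * quadF A1 b1 c1 x + g2 1 * quadF A2 b2 c2 x) :=
    ⟨_, div_nonneg (by linarith) hy12.le, div_mul_cancel₀ _ hy12.ne'⟩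
  obtain ⟨s2, hs2, hs2'⟩ : ∃ s : ℝ, 0 ≤ s ∧ s * (y2 ⬝ᵥ Amix2 A1 A2 g1 *ᵥ y2) =
      -(g1 0 * quadF A1 b1 c1 x + g1 1 * quadF A2 b2 c2 x) :=
    ⟨_, div_nonneg (by linarith) hy21.le, div_mul_cancel₀ _ hy21.ne'⟩
  have hlift : ∀ (A : Matrix (Fin n) (Fin n) ℝ) (d : Fin n → ℝ) (c : ℝ),
      (A * (vecMulVec x x + (s1 • vecMulVec y1 y1 + s2 • vecMulVec y2 y2))).trace +
        2 * (d ⬝ᵥ x) + c = quadF A d c x + s1 * (y1 ⬝ᵥ A *ᵥ y1) + s2 * (y2 ⬝ᵥ A *ᵥ y2) := by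
    intro A d c
    simp only [Matrix.mul_add, Matrix.mul_smul, trace_add, trace_smul,
      trace_mul_vecMulVec_self, smul_eq_mul, quadF]
    ring
  have h1 := dotProduct_Amix2_mulVec (A1 := A1) (A2 := A2) g1 y1 y1
  have h2 := dotProduct_Amix2_mulVec (A1 := A1) (A2 := A2) g2 y1 y1
  have h3 := dotProduct_Amix2_mulVec (A1 := A1) (A2 := A2) g1 y2 y2
  have h4 := dotProduct_Amix2_mulVec (A1 := A1) (A2 := A2) g2 y2 y2
  rw [hy1, dotProduct_zero] at h1
  rw [hy2, dotProduct_zero] at h4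
  obtain ⟨hc1, hc2⟩ := eq_zero_of_det2_ne_zero hD
    (u := quadF A1 b1 c1 x + s1 * (y1 ⬝ᵥ A1 *ᵥ y1) + s2 * (y2 ⬝ᵥ A1 *ᵥ y2))
    (v := quadF A2 b2 c2 x + s1 * (y1 ⬝ᵥ A2 *ᵥ y1) + s2 * (y2 ⬝ᵥ A2 *ᵥ y2))
    (by linear_combination -s1 * h1 - s2 * h3 + hs2')
    (by linear_combination -s1 * h2 - s2 * h4 + hs1')
  refine ⟨_, ?_, (hlift A1 b1 c1).trans_le hc1.le, (hlift A2 b2 c2).trans_le hc2.le⟩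
  rw [add_sub_cancel_left]
  exact ((posSemidef_vecMulVec_self_star y1).smul hs1).add
    ((posSemidef_vecMulVec_self_star y2).smul hs2)

end Relaxation

section Gamma

variable {n : ℕ} {A1 A2 : Matrix (Fin n) (Fin n) ℝ}

theorem ne_zero_of_posDef_Amix2 (hnc1 : ¬ A1.PosSemidef) {g : Fin 2 → ℝ}
    (hPD : (Amix2 A1 A2 g).PosDef) : g ≠ 0 := by
  rintro rfl
  rcases isEmpty_or_nonempty (Fin n) with hn | hn
  · exact hnc1 (Subsingleton.elim A1 0 ▸ PosSemidef.zero)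
  · obtain ⟨x, hx⟩ := exists_ne (0 : Fin n → ℝ)
    simpa [Amix2] using hPD.dotProduct_mulVec_pos hx

theorem pos_of_mem_Gamma1' (hnc1 : ¬ A1.PosSemidef) (hnc2 : ¬ A2.PosSemidef) {g : Fin 2 → ℝ}
    (hg : g ∈ Gamma1' A1 A2) (hg0 : g ≠ 0) : 0 < g 0 ∧ 0 < g 1 := by
  obtain ⟨hnn, hpsd⟩ := hg
  have hcancel : ∀ {c : ℝ} {M : Matrix (Fin n) (Fin n) ℝ}, 0 < c → (c • M).PosSemidef →
      M.PosSemidef := fun hc h => by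
    simpa [smul_smul, inv_mul_cancel₀ hc.ne'] using h.smul (inv_nonneg.mpr hc.le)
  refine ⟨(hnn 0).lt_of_ne' fun h0 => ?_, (hnn 1).lt_of_ne' fun h1 => ?_⟩
  · have h1 : 0 < g 1 :=
      (hnn 1).lt_of_ne' fun h1 => hg0 (funext (Fin.forall_fin_two.mpr ⟨h0, h1⟩))
    exact hnc2 (hcancel h1 (by simpa [Amix2, h0] using hpsd))
  · have h0 : 0 < g 0 :=
      (hnn 0).lt_of_ne' fun h0 => hg0 (funext (Fin.forall_fin_two.mpr ⟨h0, h1⟩))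
    exact hnc1 (hcancel h0 (by simpa [Amix2, h1] using hpsd))

theorem exists_add_smul_mem_Gamma1' (hA1 : A1.IsSymm) (hA2 : A2.IsSymm) {g : Fin 2 → ℝ}
    (hg : ∀ i, 0 ≤ g i) (hPD : (Amix2 A1 A2 g).PosDef) {h : Fin 2 → ℝ} (hh : ∀ i, 0 ≤ h i) :
    ∃ ε : ℝ, 0 < ε ∧ g + ε • h ∈ Gamma1' A1 A2 := by
  obtain ⟨ε, hε, hPDε⟩ := (hPD.eventually_posDef_add_smul (Amix2_isSymm hA1 hA2 h)).exists_gt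
  refine ⟨ε, hε, fun i => ?_, ?_⟩
  · simpa using add_nonneg (hg i) (mul_nonneg hε.le (hh i))
  · rw [← one_smul ℝ g, Amix2_smul_add_smul, one_smul]
    exact hPDε.posSemidef

theorem det2_ne_zero_of_posDef (hA1 : A1.IsSymm) (hA2 : A2.IsSymm) {g1 g2 : Fin 2 → ℝ}
    (hgen : Gamma1' A1 A2 = cone2 g1 g2) {g : Fin 2 → ℝ} (hg : g ∈ Gamma1' A1 A2)
    (hPD : (Amix2 A1 A2 g).PosDef) (hg1 : 0 < g 1) : det2 g1 g2 ≠ 0 := by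
  intro hD
  obtain ⟨ε, hε, hmem⟩ := exists_add_smul_mem_Gamma1' hA1 hA2 hg.1 hPD (h := ![1, 0])
    (by simp [Fin.forall_fin_two])
  rw [hgen] at hg hmem
  have h := det2_eq_zero_of_mem_cone2 hD hg hmem
  simp [det2] at h
  nlinarith [mul_pos hg1 hε]

theorem not_posDef_of_generator (hA1 : A1.IsSymm) (hA2 : A2.IsSymm) {g g' : Fin 2 → ℝ}
    (hgen : Gamma1' A1 A2 = cone2 g g') (hD : det2 g g' ≠ 0) (hg : 0 < g 0 ∧ 0 < g 1) :
    ¬ (Amix2 A1 A2 g).PosDef := by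
  intro hPD
  have hgΓ : g ∈ Gamma1' A1 A2 := hgen ▸ left_mem_cone2
  -- `g + ε e₀` and `g + δ e₁` lie on opposite sides of the ray through `g`
  obtain ⟨ε, hε, h0⟩ := exists_add_smul_mem_Gamma1' hA1 hA2 hgΓ.1 hPD (h := ![1, 0])
    (by simp [Fin.forall_fin_two])
  obtain ⟨δ, hδ, h1⟩ := exists_add_smul_mem_Gamma1' hA1 hA2 hgΓ.1 hPD (h := ![0, 1])
    (by simp [Fin.forall_fin_two])
  rw [hgen] at h0 h1
  have k0 := det2_mul_nonneg_of_mem_cone2 h0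
  have k1 := det2_mul_nonneg_of_mem_cone2 h1
  have e0 : det2 g ![1, 0] = -g 1 := by simp [det2]
  have e1 : det2 g ![0, 1] = g 0 := by simp [det2]
  rw [det2_add_smul, e0] at k0
  rw [det2_add_smul, e1] at k1
  rcases hD.lt_or_gt with h | h
  · nlinarith [mul_pos hδ hg.1]
  · nlinarith [mul_pos hε hg.2]

theorem pos_of_mulVec_Amix2_eq_zero {g g' : Fin 2 → ℝ} (hgen : Gamma1' A1 A2 = cone2 g g')
    {γ : Fin 2 → ℝ} (hγ : γ ∈ Gamma1' A1 A2) (hPD : (Amix2 A1 A2 γ).PosDef) {y : Fin n → ℝ}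
    (hy : y ≠ 0) (h : Amix2 A1 A2 g *ᵥ y = 0) : 0 < y ⬝ᵥ Amix2 A1 A2 g' *ᵥ y := by
  have hg' : g' ∈ Gamma1' A1 A2 := hgen ▸ cone2_comm g' g ▸ left_mem_cone2
  refine hg'.2.dotProduct_mulVec_pos fun h' => ?_
  rw [hgen] at hγ
  obtain ⟨a, b, -, -, rfl⟩ := hγ
  simpa [Amix2_smul_add_smul, add_mulVec, smul_mulVec, h, h'] using
    hPD.dotProduct_mulVec_pos hy

theorem exists_ker_of_generator (hA1 : A1.IsSymm) (hA2 : A2.IsSymm) {g g' : Fin 2 → ℝ}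
    (hgen : Gamma1' A1 A2 = cone2 g g') (hD : det2 g g' ≠ 0) (hg : 0 < g 0 ∧ 0 < g 1)
    {γ : Fin 2 → ℝ} (hγ : γ ∈ Gamma1' A1 A2) (hPD : (Amix2 A1 A2 γ).PosDef) :
    ∃ y : Fin n → ℝ, Amix2 A1 A2 g *ᵥ y = 0 ∧ 0 < y ⬝ᵥ Amix2 A1 A2 g' *ᵥ y := by
  obtain ⟨y, hy, hAy⟩ := (hgen ▸ left_mem_cone2 : g ∈ Gamma1' A1 A2).2.exists_mulVec_eq_zero
    (not_posDef_of_generator hA1 hA2 hgen hD hg)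
  exact ⟨y, hAy, pos_of_mulVec_Amix2_eq_zero hgen hγ hPD hy hAy⟩

end Gamma

section Characterization

variable {n : ℕ} {A1 A2 : Matrix (Fin n) (Fin n) ℝ} {b1 b2 : Fin n → ℝ} {c1 c2 : ℝ}

theorem add_smul_mem_Shat_of_ker (hA1 : A1.IsSymm) (hA2 : A2.IsSymm) {g : Fin 2 → ℝ}
    (hg : 0 < g 0 ∧ 0 < g 1) {z : Fin n → ℝ} (hz : Amix2 A1 A2 g *ᵥ z = 0)
    (hbz : bmix2 b1 b2 g ⬝ᵥ z = 0) {x : Fin n → ℝ}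
    (hx : g 0 * quadF A1 b1 c1 x + g 1 * quadF A2 b2 c2 x ≤ 0) {t : ℝ}
    (ht : quadF A1 b1 c1 (x + t • z) = 0 ∨ quadF A2 b2 c2 (x + t • z) = 0) :
    x + t • z ∈ Shat A1 A2 b1 b2 c1 c2 := by
  have hconst := mix2_add_smul_of_ker (c1 := c1) (c2 := c2) hA1 hA2 hz hbz x t
  rcases ht with h | h <;> rw [h] at hconst
  · exact ⟨h.le, nonpos_of_mul_nonpos_right (by linarith) hg.2⟩
  · exact ⟨nonpos_of_mul_nonpos_right (by linarith) hg.1, h.le⟩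

theorem ShatSDP_subset_convexHull_Shat (hA1 : A1.IsSymm) (hA2 : A2.IsSymm) {g1 g2 : Fin 2 → ℝ}
    (hg1 : 0 < g1 0 ∧ 0 < g1 1) (hg2 : 0 < g2 0 ∧ 0 < g2 1)
    (hpsd1 : (Amix2 A1 A2 g1).PosSemidef) (hpsd2 : (Amix2 A1 A2 g2).PosSemidef)
    {z1 z2 : Fin n → ℝ} (hz1 : Amix2 A1 A2 g1 *ᵥ z1 = 0) (hbz1 : bmix2 b1 b2 g1 ⬝ᵥ z1 = 0)
    (hz12 : 0 < z1 ⬝ᵥ Amix2 A1 A2 g2 *ᵥ z1) (hz2 : Amix2 A1 A2 g2 *ᵥ z2 = 0)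
    (hbz2 : bmix2 b1 b2 g2 ⬝ᵥ z2 = 0) (hz21 : 0 < z2 ⬝ᵥ Amix2 A1 A2 g1 *ᵥ z2) :
    ShatSDP A1 A2 b1 b2 c1 c2 ⊆ convexHull ℝ (Shat A1 A2 b1 b2 c1 c2) := by
  intro x hx
  have hp1 := mix2_nonpos_of_mem_ShatSDP (Fin.forall_fin_two.mpr ⟨hg1.1.le, hg1.2.le⟩)
    hpsd1 hx
  have hp2 := mix2_nonpos_of_mem_ShatSDP (Fin.forall_fin_two.mpr ⟨hg2.1.le, hg2.2.le⟩)
    hpsd2 hx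
  have e1 := dotProduct_Amix2_mulVec (A1 := A1) (A2 := A2) g1 z1 z1
  have e2 := dotProduct_Amix2_mulVec (A1 := A1) (A2 := A2) g2 z2 z2
  rw [hz1, dotProduct_zero] at e1
  rw [hz2, dotProduct_zero] at e2
  rw [dotProduct_Amix2_mulVec] at hz12 hz21
  obtain ⟨hneg1, hneg2⟩ :=
    neg_or_neg_of_orthogonal hg1.1 hg1.2 hg2.1 hg2.2 e1.symm hz12 e2.symm hz21
  rcases le_or_gt (quadF A1 b1 c1 x) 0 with h1 | h1
  · rcases le_or_gt (quadF A2 b2 c2 x) 0 with h2 | h2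
    · exact subset_convexHull ℝ _ ⟨h1, h2⟩
    rcases hneg2 with h | h
    · exact mem_convexHull_of_quadF_pos hA2 h h2 fun t ht =>
        add_smul_mem_Shat_of_ker hA1 hA2 hg1 hz1 hbz1 hp1 (.inr ht)
    · exact mem_convexHull_of_quadF_pos hA2 h h2 fun t ht =>
        add_smul_mem_Shat_of_ker hA1 hA2 hg2 hz2 hbz2 hp2 (.inr ht)
  rcases hneg1 with h | h
  · exact mem_convexHull_of_quadF_pos hA1 h h1 fun t ht =>
      add_smul_mem_Shat_of_ker hA1 hA2 hg1 hz1 hbz1 hp1 (.inl ht)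
  · exact mem_convexHull_of_quadF_pos hA1 h h1 fun t ht =>
      add_smul_mem_Shat_of_ker hA1 hA2 hg2 hz2 hbz2 hp2 (.inl ht)

theorem convexHull_Shat_ne_ShatSDP (hA1 : A1.IsSymm) (hA2 : A2.IsSymm) {g g' : Fin 2 → ℝ}
    (hg : 0 < g 0 ∧ 0 < g 1) (hg' : 0 < g' 0 ∧ 0 < g' 1) (hpsd : (Amix2 A1 A2 g).PosSemidef)
    (hfail : ¬ ∃ y : Fin n → ℝ, y ≠ 0 ∧ Amix2 A1 A2 g *ᵥ y = 0 ∧ bmix2 b1 b2 g ⬝ᵥ y = 0)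
    {y : Fin n → ℝ} (hy : Amix2 A1 A2 g' *ᵥ y = 0) (hyg : 0 < y ⬝ᵥ Amix2 A1 A2 g *ᵥ y)
    {x₀ : Fin n → ℝ} (hx₀1 : quadF A1 b1 c1 x₀ < 0) (hx₀2 : quadF A2 b2 c2 x₀ < 0)
    (hT : ∀ x, g 0 * quadF A1 b1 c1 x + g 1 * quadF A2 b2 c2 x ≤ 0 →
      g' 0 * quadF A1 b1 c1 x + g' 1 * quadF A2 b2 c2 x ≤ 0 → x ∈ ShatSDP A1 A2 b1 b2 c1 c2) :
    convexHull ℝ (Shat A1 A2 b1 b2 c1 c2) ≠ ShatSDP A1 A2 b1 b2 c1 c2 := by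
  have hsymm := Amix2_isSymm hA1 hA2 g
  -- orient `y` so that the `g'`-aggregate, affine along `y`, does not increase
  obtain ⟨v, hv, hvg, hbv⟩ : ∃ v : Fin n → ℝ, Amix2 A1 A2 g' *ᵥ v = 0 ∧
      0 < v ⬝ᵥ Amix2 A1 A2 g *ᵥ v ∧ bmix2 b1 b2 g' ⬝ᵥ v ≤ 0 := by
    rcases le_total (bmix2 b1 b2 g' ⬝ᵥ y) 0 with h | h
    · exact ⟨y, hy, hyg, h⟩
    · exact ⟨-y, by simp [mulVec_neg, hy], by simpa [mulVec_neg] using hyg, by simpa using h⟩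
  have hx₀ : quadF (Amix2 A1 A2 g) (bmix2 b1 b2 g) (cmix2 c1 c2 g) x₀ < 0 := by
    rw [quadF_mix2]; nlinarith
  obtain ⟨t, ht, hxt⟩ := exists_pos_quadF_add_smul_eq_zero hsymm hx₀ hvg
  have hxt' : g' 0 * quadF A1 b1 c1 (x₀ + t • v) + g' 1 * quadF A2 b2 c2 (x₀ + t • v) < 0 := by
    rw [← quadF_mix2 (c1 := c1) (c2 := c2),
      quadF_add_smul_of_mulVec_eq_zero (Amix2_isSymm hA1 hA2 g') _ _ _ hv, quadF_mix2]
    nlinarith [mul_nonpos_of_nonneg_of_nonpos ht.le hbv]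
  rw [quadF_mix2] at hxt
  have hxS : x₀ + t • v ∉ Shat A1 A2 b1 b2 c1 c2 := by
    rintro ⟨h1, h2⟩
    have e1 : quadF A1 b1 c1 (x₀ + t • v) = 0 := by nlinarith
    have e2 : quadF A2 b2 c2 (x₀ + t • v) = 0 := by nlinarith
    simp [e1, e2] at hxt'
  intro heq
  refine not_mem_convexHull_of_quadF_eq_zero hsymm hpsd hfail (c := cmix2 c1 c2 g)
    (fun z hz => ?_) (by rw [quadF_mix2]; exact hxt) hxS ?_
  · rw [quadF_mix2]
    nlinarith [mul_nonpos_of_nonneg_of_nonpos hg.1.le hz.1,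
      mul_nonpos_of_nonneg_of_nonpos hg.2.le hz.2]
  · rw [heq]
    exact hT _ hxt.le hxt'.le

end Characterization

theorem stmt19_general {n : ℕ} (A1 A2 : Matrix (Fin n) (Fin n) ℝ) (b1 b2 : Fin n → ℝ)
    (c1 c2 : ℝ) (hA1 : A1.IsSymm) (hA2 : A2.IsSymm)
    (hnc1 : ¬ A1.PosSemidef) (hnc2 : ¬ A2.PosSemidef)
    (hprimal : ∃ x : Fin n → ℝ, quadF A1 b1 c1 x < 0 ∧ quadF A2 b2 c2 x < 0)
    (hdual : ∃ g : Fin 2 → ℝ, (∀ i, 0 ≤ g i) ∧ (Amix2 A1 A2 g).PosDef)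
    (g1 g2 : Fin 2 → ℝ)
    (hgen : Gamma1' A1 A2 =
      {g : Fin 2 → ℝ | ∃ a b : ℝ, 0 ≤ a ∧ 0 ≤ b ∧ g = a • g1 + b • g2}) :
    convexHull ℝ (Shat A1 A2 b1 b2 c1 c2) = ShatSDP A1 A2 b1 b2 c1 c2 ↔
      ((∃ y : Fin n → ℝ, y ≠ 0 ∧ (Amix2 A1 A2 g1).mulVec y = 0 ∧
          bmix2 b1 b2 g1 ⬝ᵥ y = 0) ∧
       (∃ y : Fin n → ℝ, y ≠ 0 ∧ (Amix2 A1 A2 g2).mulVec y = 0 ∧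
          bmix2 b1 b2 g2 ⬝ᵥ y = 0)) := by
  obtain ⟨x₀, hx₀1, hx₀2⟩ := hprimal
  obtain ⟨γ, hγ, hPD⟩ := hdual
  have hγΓ : γ ∈ Gamma1' A1 A2 := ⟨hγ, hPD.posSemidef⟩
  have hgen' : Gamma1' A1 A2 = cone2 g2 g1 := hgen.trans (cone2_comm g1 g2)
  have hg1Γ : g1 ∈ Gamma1' A1 A2 := hgen ▸ left_mem_cone2
  have hg2Γ : g2 ∈ Gamma1' A1 A2 := hgen' ▸ left_mem_cone2
  have hD : det2 g1 g2 ≠ 0 := det2_ne_zero_of_posDef hA1 hA2 hgen hγΓ hPD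
    (pos_of_mem_Gamma1' hnc1 hnc2 hγΓ (ne_zero_of_posDef_Amix2 hnc1 hPD)).2
  have hD' : det2 g2 g1 ≠ 0 := by rwa [det2_comm, neg_ne_zero]
  have hpos1 := pos_of_mem_Gamma1' hnc1 hnc2 hg1Γ (ne_zero_of_det2_ne_zero hD)
  have hpos2 := pos_of_mem_Gamma1' hnc1 hnc2 hg2Γ (ne_zero_of_det2_ne_zero hD')
  obtain ⟨y1, hy1, hy12⟩ := exists_ker_of_generator hA1 hA2 hgen hD hpos1 hγΓ hPD
  obtain ⟨y2, hy2, hy21⟩ := exists_ker_of_generator hA1 hA2 hgen' hD' hpos2 hγΓ hPD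
  have hT (x : Fin n → ℝ) := mem_ShatSDP_of_mix2_nonpos (b1 := b1) (b2 := b2) (c1 := c1)
    (c2 := c2) (x := x) hD hy1 hy2 hy12 hy21
  refine ⟨fun heq => ⟨?_, ?_⟩, fun ⟨⟨z1, hz1, hAz1, hbz1⟩, ⟨z2, hz2, hAz2, hbz2⟩⟩ => ?_⟩
  · by_contra h
    exact convexHull_Shat_ne_ShatSDP hA1 hA2 hpos1 hpos2 hg1Γ.2 h hy2 hy21 hx₀1 hx₀2 hT heq
  · by_contra h
    exact convexHull_Shat_ne_ShatSDP hA1 hA2 hpos2 hpos1 hg2Γ.2 h hy1 hy12 hx₀1 hx₀2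
      (fun x h2 h1 => hT x h1 h2) heq
  · exact convexHull_Shat_subset_ShatSDP.antisymm <| ShatSDP_subset_convexHull_Shat hA1 hA2
      hpos1 hpos2 hg1Γ.2 hg2Γ.2 hAz1 hbz1 (pos_of_mulVec_Amix2_eq_zero hgen hγΓ hPD hz1 hAz1)
      hAz2 hbz2 (pos_of_mulVec_Amix2_eq_zero hgen' hγΓ hPD hz2 hAz2)

/-- sets defined by two nonconvex quadratic constraints, with
primal and dual strict feasibility: `conv(Ŝ) = Ŝ_SDP` iff for both generators
`γ⁽ⁱ⁾` of `Γ₁`, `ker(A[γ⁽ⁱ⁾]) ∩ (b[γ⁽ⁱ⁾])^⊥` is nontrivial. -/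
theorem stmt19 {n : ℕ} (A1 A2 : Matrix (Fin n) (Fin n) ℝ) (b1 b2 : Fin n → ℝ)
    (c1 c2 : ℝ) (hA1 : A1.IsSymm) (hA2 : A2.IsSymm)
    (hnc1 : ¬ A1.PosSemidef) (hnc2 : ¬ A2.PosSemidef)
    (hprimal : ∃ x : Fin n → ℝ, quadF A1 b1 c1 x < 0 ∧ quadF A2 b2 c2 x < 0)
    (hdual : ∃ g : Fin 2 → ℝ, (∀ i, 0 ≤ g i) ∧ (Amix2 A1 A2 g).PosDef)
    (g1 g2 : Fin 2 → ℝ) (hg1 : ∀ i, 0 ≤ g1 i) (hg2 : ∀ i, 0 ≤ g2 i)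
    (hgen : Gamma1' A1 A2 =
      {g : Fin 2 → ℝ | ∃ a b : ℝ, 0 ≤ a ∧ 0 ≤ b ∧ g = a • g1 + b • g2}) :
    convexHull ℝ (Shat A1 A2 b1 b2 c1 c2) = ShatSDP A1 A2 b1 b2 c1 c2 ↔
      ((∃ y : Fin n → ℝ, y ≠ 0 ∧ (Amix2 A1 A2 g1).mulVec y = 0 ∧
          bmix2 b1 b2 g1 ⬝ᵥ y = 0) ∧
       (∃ y : Fin n → ℝ, y ≠ 0 ∧ (Amix2 A1 A2 g2).mulVec y = 0 ∧
          bmix2 b1 b2 g2 ⬝ᵥ y = 0)) :=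
  stmt19_general A1 A2 b1 b2 c1 c2 hA1 hA2 hnc1 hnc2 hprimal hdual g1 g2 hgen
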